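/- Let H_P(a) denote the entropy of the Poisson(a) distribution and I_P(b:a) = a − b + b log b − b log a the Kullback–Leibler divergence between Poisson(b) and Poisson(a). For any α ∈ [0,1] and x, y > 0, with z = αx + (1−α)y, the following hold: H_P(z) − ( α H_P(x) + (1−α) H_P(y) ) ≤ α I_P(x:z) + (1−α) I_P(y:z), and α I_P(x:z) + (1−α) I_P(y:z) = z·I( αx/z : α ), where I(a:q) = a log(a/q) + (1−a) log((1−a)/(1−q)). -/

import Mathlib

open Real

namespace RD

noncomputable section

/-- The entropy of the `Poisson(a)` distribution (natural logarithms):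
`H_P(a) = a - a log a + e^{-a} ∑_{k≥0} (a^k/k!) log k!`. -/
def HPois (a : ℝ) : ℝ :=
  a - a * Real.log a
    + Real.exp (-a) * ∑' k : ℕ, a ^ k / (k.factorial : ℝ) * Real.log (k.factorial : ℝ)

/-- The Kullback–Leibler divergence between `Poisson(b)` and `Poisson(a)`:
`I_P(b:a) = a - b + b log b - b log a`. -/
def IPois (b a : ℝ) : ℝ := a - b + b * Real.log b - b * Real.log a

/-- The Kullback–Leibler divergence `I(a:q)` between Bernoulli(a) and Bernoulli(q). -/
def Ibern (a q : ℝ) : ℝ :=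
  a * Real.log (a / q) + (1 - a) * Real.log ((1 - a) / (1 - q))

end

end RD

namespace Stmt18Aux

open Real Finset

noncomputable def pk (a : ℝ) (k : ℕ) : ℝ := Real.exp (-a) * a ^ k / (k.factorial : ℝ)

noncomputable def dd (i : ℕ) : ℝ := Real.log ((i : ℝ) + 2) - Real.log ((i : ℝ) + 1)

lemma dd_nonneg (i : ℕ) : 0 ≤ dd i := by
  have h : Real.log ((i : ℝ) + 1) ≤ Real.log ((i : ℝ) + 2) :=
    Real.log_le_log (by positivity) (by linarith)
  simpa [dd] using sub_nonneg.2 h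

lemma nat_le_four_pow (k : ℕ) : (k : ℝ) ≤ 4 ^ k := by
  have h : (k : ℝ) < 2 ^ k := by exact_mod_cast (Nat.lt_two_pow_self (n := k))
  have h2 : (2 : ℝ) ^ k ≤ 4 ^ k := pow_le_pow_left₀ (by norm_num) (by norm_num) k
  linarith

lemma log_factorial_nonneg (k : ℕ) : 0 ≤ Real.log (k.factorial : ℝ) :=
  Real.log_nonneg (by exact_mod_cast Nat.one_le_iff_ne_zero.2 k.factorial_ne_zero)

lemma log_factorial_le (k : ℕ) : Real.log (k.factorial : ℝ) ≤ 4 ^ k := by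
  have h1 : (k.factorial : ℝ) ≤ (k : ℝ) ^ k := by exact_mod_cast Nat.factorial_le_pow k
  have hkf : (0:ℝ) < (k.factorial : ℝ) := by exact_mod_cast k.factorial_pos
  have h2 : Real.log (k.factorial : ℝ) ≤ (k : ℝ) * Real.log k := by
    calc Real.log (k.factorial : ℝ) ≤ Real.log ((k : ℝ) ^ k) :=
          Real.log_le_log hkf h1
      _ = (k : ℝ) * Real.log k := by rw [Real.log_pow]
  have h3 : Real.log (k : ℝ) ≤ (k : ℝ) := Real.log_le_self (by positivity)
  have h4 : (k : ℝ) < 2 ^ k := by exact_mod_cast (Nat.lt_two_pow_self (n := k))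
  have h5 : (0:ℝ) ≤ k := by positivity
  calc Real.log (k.factorial : ℝ) ≤ (k:ℝ) * (k:ℝ) := h2.trans (by nlinarith)
    _ ≤ (2:ℝ)^k * 2^k := by nlinarith
    _ = 4 ^ k := by rw [← mul_pow]; norm_num

lemma summable_master {a : ℝ} (ha : 0 ≤ a) {t : ℕ → ℝ} (ht0 : ∀ k, 0 ≤ t k)
    (ht : ∀ k, t k ≤ 4 ^ k) : Summable (fun k : ℕ => a ^ k / (k.factorial : ℝ) * t k) := by
  refine Summable.of_nonneg_of_le (fun k => mul_nonneg (by positivity) (ht0 k)) (fun k => ?_)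
    (Real.summable_pow_div_factorial (4 * a))
  calc a ^ k / (k.factorial : ℝ) * t k ≤ a ^ k / (k.factorial : ℝ) * 4 ^ k := by
        have : (0:ℝ) ≤ a ^ k / (k.factorial : ℝ) := by positivity
        exact mul_le_mul_of_nonneg_left (ht k) this
    _ = (4 * a) ^ k / (k.factorial : ℝ) := by rw [mul_pow]; ring

lemma summable_pk {a : ℝ} (ha : 0 ≤ a) {t : ℕ → ℝ} (ht0 : ∀ k, 0 ≤ t k)
    (ht : ∀ k, t k ≤ 4 ^ k) : Summable (fun k : ℕ => pk a k * t k) := by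
  refine ((summable_master ha ht0 ht).mul_left (Real.exp (-a))).congr fun k => ?_
  simp only [pk]; ring

lemma tsum_pk (a : ℝ) (t : ℕ → ℝ) :
    ∑' k : ℕ, pk a k * t k
      = Real.exp (-a) * ∑' k : ℕ, a ^ k / (k.factorial : ℝ) * t k := by
  rw [← tsum_mul_left]; exact tsum_congr fun k => by simp only [pk]; ring

lemma tsum_exp (a : ℝ) : ∑' k : ℕ, a ^ k / (k.factorial : ℝ) = Real.exp a := by
  rw [Real.exp_eq_exp_ℝ, NormedSpace.exp_eq_tsum_div]

lemma tsum_pk_one (a : ℝ) : ∑' k : ℕ, pk a k = 1 := by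
  have := tsum_pk a (fun _ => 1)
  simp only [mul_one] at this
  rw [this, tsum_exp, ← Real.exp_add]
  simp

lemma tsum_pk_id {a : ℝ} (ha : 0 ≤ a) : ∑' k : ℕ, pk a k * (k : ℝ) = a := by
  rw [tsum_pk]
  have hs : Summable (fun k : ℕ => a ^ k / (k.factorial : ℝ) * (k : ℝ)) :=
    summable_master ha (fun k => by positivity) (fun k => nat_le_four_pow k)
  have h1 : ∑' k : ℕ, a ^ k / (k.factorial : ℝ) * (k : ℝ) = a * Real.exp a := by
    rw [Summable.tsum_eq_zero_add hs]
    have h2 : ∀ k : ℕ, a ^ (k + 1) / ((k + 1).factorial : ℝ) * ((k : ℝ) + 1)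
        = a * (a ^ k / (k.factorial : ℝ)) := by
      intro k
      have hf : ((k + 1).factorial : ℝ) = ((k : ℝ) + 1) * (k.factorial : ℝ) := by
        rw [Nat.factorial_succ]; push_cast; ring
      have hk1 : ((k : ℝ) + 1) ≠ 0 := by positivity
      have hkf : (k.factorial : ℝ) ≠ 0 := by positivity
      rw [hf]; field_simp; ring
    simp only [Nat.cast_add, Nat.cast_one, h2]
    rw [tsum_mul_left, tsum_exp]
    simp
  rw [h1, show Real.exp (-a) * (a * Real.exp a) = a * (Real.exp (-a) * Real.exp a) by ring,
    ← Real.exp_add]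
  simp

lemma sum_dd_tele (n : ℕ) : ∑ i ∈ Finset.range n, dd i = Real.log ((n : ℝ) + 1) := by
  induction n with
  | zero => simp
  | succ m ih => rw [Finset.sum_range_succ, ih, dd]; push_cast; ring

lemma sum_dd (k : ℕ) :
    ∑ i ∈ Finset.range k, dd i * ((k : ℝ) - i) = Real.log ((k + 1).factorial : ℝ) := by
  induction k with
  | zero => simp
  | succ n ih =>
    have step : ∑ i ∈ Finset.range (n + 1), dd i * (((n + 1 : ℕ) : ℝ) - i)
        = (∑ i ∈ Finset.range n, dd i * ((n : ℝ) - i))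
          + ∑ i ∈ Finset.range (n + 1), dd i := by
      rw [Finset.sum_range_succ, Finset.sum_range_succ dd]
      rw [Finset.sum_congr rfl (fun i (_ : i ∈ Finset.range n) => by push_cast; ring :
        ∀ i ∈ Finset.range n, dd i * (((n + 1 : ℕ) : ℝ) - (i:ℝ))
          = dd i * ((n:ℝ)-(i:ℝ)) + dd i), Finset.sum_add_distrib]
      push_cast; ring
    have hfact : ((n + 2).factorial : ℝ) = ((n : ℝ) + 2) * ((n + 1).factorial : ℝ) := by
      rw [show n + 2 = (n + 1) + 1 by ring, Nat.factorial_succ]; push_cast; ring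
    rw [step, ih, sum_dd_tele, hfact, Real.log_mul (by positivity)
      (by exact_mod_cast (n+1).factorial_ne_zero)]
    push_cast
    ring

lemma log_factorial_eq (k : ℕ) :
    Real.log (k.factorial : ℝ) = ∑' i : ℕ, dd i * max ((k : ℝ) - ((i : ℝ) + 1)) 0 := by
  cases k with
  | zero =>
    symm
    have h : ∀ i : ℕ, dd i * max (((0:ℕ) : ℝ) - ((i : ℝ) + 1)) 0 = 0 := fun i => by
      rw [max_eq_right (by push_cast; linarith [Nat.cast_nonneg (α := ℝ) i]), mul_zero]
    rw [tsum_congr h, tsum_zero]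
    simp
  | succ n =>
    rw [tsum_eq_sum (s := Finset.range n) ?_]
    · rw [← sum_dd n]
      refine Finset.sum_congr rfl fun i hi => ?_
      have hi' : (i : ℝ) < n := by exact_mod_cast Finset.mem_range.1 hi
      have hmax : max (((n + 1 : ℕ) : ℝ) - ((i:ℝ)+1)) 0 = (n : ℝ) - i := by
        rw [max_eq_left (by push_cast; linarith)]; push_cast; ring
      rw [hmax]
    · intro i hi
      have hi' : (n : ℝ) ≤ i := by exact_mod_cast Nat.not_lt.1 (fun h => hi (Finset.mem_range.2 h))
      rw [max_eq_right (by push_cast; linarith), mul_zero]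

noncomputable def HH (c : ℝ) (a : ℝ) : ℝ := ∑' k : ℕ, pk a k * max ((k : ℝ) - c) 0

noncomputable def RR (m : ℕ) (a : ℝ) : ℝ :=
  Real.exp (-a) * ∑ k ∈ Finset.range m, ((m : ℝ) - k) * a ^ k / (k.factorial : ℝ)

noncomputable def SS (m : ℕ) (a : ℝ) : ℝ :=
  Real.exp (-a) * ∑ k ∈ Finset.range (m + 1), a ^ k / (k.factorial : ℝ)

lemma max_split (u : ℝ) : max u 0 = u + max (-u) 0 := by
  rcases le_total u 0 with h | h
  · rw [max_eq_right h, max_eq_left (by linarith)]; ring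
  · rw [max_eq_left h, max_eq_right (by linarith)]; ring

lemma hasDeriv_term (k : ℕ) (c : ℝ) (a : ℝ) :
    HasDerivAt (fun x : ℝ => Real.exp (-x) * x ^ (k + 1) * c)
      ((Real.exp (-a) * (((k : ℝ) + 1) * a ^ k - a ^ (k + 1))) * c) a := by
  have h1 : HasDerivAt (fun x : ℝ => Real.exp (-x)) (-Real.exp (-a)) a := by
    simpa using (hasDerivAt_neg a).exp
  have h2 : HasDerivAt (fun x : ℝ => x ^ (k + 1)) (((k : ℝ) + 1) * a ^ k) a := by
    simpa using hasDerivAt_pow (k + 1) a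
  have := (h1.mul h2).mul_const c
  refine this.congr_deriv ?_
  ring

lemma hasDeriv_SS (m : ℕ) (a : ℝ) :
    HasDerivAt (SS m) (-(Real.exp (-a) * a ^ m / (m.factorial : ℝ))) a := by
  induction m with
  | zero =>
    have he : SS 0 = fun x : ℝ => Real.exp (-x) := by
      funext x; simp [SS]
    rw [he]
    simpa using (hasDerivAt_neg a).exp
  | succ n ih =>
    have he : SS (n + 1) = fun x : ℝ =>
        SS n x + Real.exp (-x) * x ^ (n + 1) * (1 / ((n + 1).factorial : ℝ)) := by
      funext x; simp only [SS, Finset.sum_range_succ]; ring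
    rw [he]
    have h := ih.add (hasDeriv_term n (1 / ((n + 1).factorial : ℝ)) a)
    refine h.congr_deriv ?_
    have hfact : ((n + 1).factorial : ℝ) = ((n : ℝ) + 1) * (n.factorial : ℝ) := by
      rw [Nat.factorial_succ]; push_cast; ring
    have h1 : ((n:ℝ) + 1) ≠ 0 := by positivity
    have h2 : (n.factorial : ℝ) ≠ 0 := by exact_mod_cast n.factorial_ne_zero
    rw [hfact]
    field_simp
    ring

lemma RR_succ_succ (m : ℕ) : RR (m + 2) = fun x => RR (m + 1) x + SS (m + 1) x := by
  funext x
  simp only [RR, SS, ← mul_add]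
  congr 1
  rw [Finset.sum_range_succ, Finset.sum_range_succ (fun k => x ^ k / (k.factorial : ℝ))]
  rw [Finset.sum_congr rfl (fun k (hk : k ∈ Finset.range (m+1)) => by push_cast; ring :
    ∀ k ∈ Finset.range (m+1), (((m + 2:ℕ) : ℝ) - (k:ℝ)) * x ^ k / (k.factorial : ℝ)
      = (((m + 1:ℕ) : ℝ) - (k:ℝ)) * x ^ k / (k.factorial : ℝ) + x ^ k / (k.factorial : ℝ)),
    Finset.sum_add_distrib]
  push_cast
  ring

lemma hasDeriv_RR (m : ℕ) (a : ℝ) : HasDerivAt (RR (m + 1)) (-(SS m a)) a := by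
  induction m with
  | zero =>
    have he : RR 1 = fun x : ℝ => Real.exp (-x) := by
      funext x; simp [RR]
    have he2 : SS 0 a = Real.exp (-a) := by simp [SS]
    rw [he, he2]
    simpa using (hasDerivAt_neg a).exp
  | succ n ih =>
    rw [RR_succ_succ n]
    have h := ih.add (hasDeriv_SS (n + 1) a)
    refine h.congr_deriv ?_
    simp only [SS, Finset.sum_range_succ]
    ring

lemma RR_convex (m : ℕ) : ConvexOn ℝ (Set.Ici (0:ℝ)) (RR (m + 1)) := by
  refine convexOn_of_hasDerivWithinAt2_nonneg (convex_Ici 0)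
    (f' := fun a => -(SS m a)) (f'' := fun a => Real.exp (-a) * a ^ m / (m.factorial : ℝ))
    ?_ ?_ ?_ ?_
  · exact fun x _ => (hasDeriv_RR m x).differentiableAt.continuousAt.continuousWithinAt
  · exact fun x _ => (hasDeriv_RR m x).hasDerivWithinAt
  · intro x _
    exact ((hasDeriv_SS m x).neg.congr_deriv (neg_neg _)).hasDerivWithinAt
  · intro x hx
    rw [interior_Ici] at hx
    have : (0:ℝ) < x := hx
    positivity

lemma pk_nonneg {a : ℝ} (ha : 0 ≤ a) (k : ℕ) : 0 ≤ pk a k := by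
  unfold pk; positivity

lemma one_le_four_pow (k : ℕ) : (1:ℝ) ≤ 4 ^ k := by simpa using pow_le_pow_left₀ (by norm_num) (by norm_num : (1:ℝ) ≤ 4) k

lemma summable_pk_one {a : ℝ} (ha : 0 ≤ a) : Summable (pk a) := by
  have := summable_pk ha (fun _ => zero_le_one) one_le_four_pow
  simpa using this

lemma HH_eq (m : ℕ) {a : ℝ} (ha : 0 ≤ a) : HH (m : ℝ) a = a - m + RR m a := by
  have hsplit : ∀ k : ℕ, pk a k * max ((k:ℝ) - (m:ℝ)) 0
      = pk a k * (k:ℝ) + ((-(m:ℝ)) * pk a k + pk a k * max ((m:ℝ) - (k:ℝ)) 0) := by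
    intro k
    rw [max_split ((k:ℝ) - (m:ℝ)), neg_sub]
    ring
  have hA : Summable (fun k : ℕ => pk a k * (k:ℝ)) :=
    summable_pk ha (fun k => Nat.cast_nonneg k) nat_le_four_pow
  have hB : Summable (fun k : ℕ => (-(m:ℝ)) * pk a k) := (summable_pk_one ha).mul_left _
  have hC : Summable (fun k : ℕ => pk a k * max ((m:ℝ) - (k:ℝ)) 0) := by
    refine summable_of_ne_finset_zero (s := Finset.range m) (fun k hk => ?_)
    have hk' : (m : ℝ) ≤ k := by exact_mod_cast Nat.not_lt.1 (fun h => hk (Finset.mem_range.2 h))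
    rw [max_eq_right (by linarith), mul_zero]
  have hCval : ∑' k : ℕ, pk a k * max ((m:ℝ) - (k:ℝ)) 0 = RR m a := by
    rw [tsum_eq_sum (s := Finset.range m) (fun k hk => by
      have hk' : (m : ℝ) ≤ k := by exact_mod_cast Nat.not_lt.1 (fun h => hk (Finset.mem_range.2 h))
      rw [max_eq_right (by linarith), mul_zero])]
    rw [RR, Finset.mul_sum]
    refine Finset.sum_congr rfl fun k hk => ?_
    have hk' : (k : ℝ) < m := by exact_mod_cast Finset.mem_range.1 hk
    rw [max_eq_left (by linarith)]
    simp only [pk]; ring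
  rw [HH, tsum_congr hsplit, Summable.tsum_add hA (hB.add hC), Summable.tsum_add hB hC, tsum_pk_id ha,
    tsum_mul_left, tsum_pk_one, hCval]
  ring

noncomputable def fS (a : ℝ) : ℝ := ∑' k : ℕ, pk a k * Real.log (k.factorial : ℝ)

lemma fS_decomp {a : ℝ} (ha : 0 ≤ a) :
    (Summable fun i : ℕ => dd i * HH ((i:ℝ)+1) a)
    ∧ fS a = ∑' i : ℕ, dd i * HH ((i:ℝ)+1) a := by
  set F : ℕ → ℕ → ℝ := fun k i => pk a k * (dd i * max ((k:ℝ) - ((i:ℝ)+1)) 0) with hF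
  have hFnn : (0 : ℕ × ℕ → ℝ) ≤ Function.uncurry F := by
    intro p
    exact mul_nonneg (pk_nonneg ha _) (mul_nonneg (dd_nonneg _) (le_max_right _ _))
  have hinner : ∀ k, Summable (fun i => F k i) := fun k => by
    refine summable_of_ne_finset_zero (s := Finset.range k) (fun i hi => ?_)
    have hi' : (k : ℝ) ≤ i := by exact_mod_cast Nat.not_lt.1 (fun h => hi (Finset.mem_range.2 h))
    simp only [hF]
    rw [max_eq_right (by linarith), mul_zero, mul_zero]
  have hinner_val : ∀ k, ∑' i, F k i = pk a k * Real.log (k.factorial : ℝ) := fun k => by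
    simp only [hF]
    rw [tsum_mul_left, ← log_factorial_eq]
  have houter : Summable (fun k => ∑' i, F k i) := by
    refine Summable.congr ?_ (fun k => (hinner_val k).symm)
    exact summable_pk ha log_factorial_nonneg log_factorial_le
  have hunc : Summable (Function.uncurry F) :=
    (summable_prod_of_nonneg hFnn).2 ⟨fun k => hinner k, houter⟩
  have hswap : ∑' i, ∑' k, F k i = ∑' k, ∑' i, F k i := Summable.tsum_comm hunc
  have hperi : ∀ i, ∑' k, F k i = dd i * HH ((i:ℝ)+1) a := fun i => by
    rw [HH, ← tsum_mul_left]
    exact tsum_congr fun k => by simp only [hF]; ring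
  have houter' : Summable (fun i => ∑' k, F k i) := hunc.prod_symm.prod
  constructor
  · exact houter'.congr hperi
  · rw [fS, tsum_congr (fun k => (hinner_val k).symm), ← hswap]
    exact tsum_congr hperi

lemma HH_combo (m : ℕ) {α x y : ℝ} (hα0 : 0 ≤ α) (hα1 : α ≤ 1) (hx : 0 ≤ x) (hy : 0 ≤ y) :
    HH ((m:ℝ)+1) (α*x+(1-α)*y) ≤ α * HH ((m:ℝ)+1) x + (1-α) * HH ((m:ℝ)+1) y := by
  have hz : 0 ≤ α*x+(1-α)*y :=
    add_nonneg (mul_nonneg hα0 hx) (mul_nonneg (by linarith) hy)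
  have e : ∀ {b:ℝ}, 0 ≤ b → HH ((m:ℝ)+1) b = b - ((m:ℝ)+1) + RR (m+1) b := by
    intro b hb
    have h := HH_eq (m+1) hb
    push_cast at h
    exact h
  rw [e hz, e hx, e hy]
  have hcv := (RR_convex m).2 (Set.mem_Ici.2 hx) (Set.mem_Ici.2 hy) hα0
    (by linarith : (0:ℝ) ≤ 1 - α) (by ring)
  simp only [smul_eq_mul] at hcv
  nlinarith [hcv]

lemma fS_combo {α x y : ℝ} (hα0 : 0 ≤ α) (hα1 : α ≤ 1) (hx : 0 ≤ x) (hy : 0 ≤ y) :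
    fS (α*x+(1-α)*y) ≤ α * fS x + (1-α) * fS y := by
  have hz : 0 ≤ α*x+(1-α)*y :=
    add_nonneg (mul_nonneg hα0 hx) (mul_nonneg (by linarith) hy)
  obtain ⟨hsz, hez⟩ := fS_decomp hz
  obtain ⟨hsx, hex⟩ := fS_decomp hx
  obtain ⟨hsy, hey⟩ := fS_decomp hy
  rw [hez, hex, hey]
  have hrhs : α * (∑' i : ℕ, dd i * HH ((i:ℝ)+1) x)
        + (1-α) * (∑' i : ℕ, dd i * HH ((i:ℝ)+1) y)
      = ∑' i : ℕ, (α * (dd i * HH ((i:ℝ)+1) x) + (1-α) * (dd i * HH ((i:ℝ)+1) y)) := by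
    rw [Summable.tsum_add (hsx.mul_left α) (hsy.mul_left (1-α)), tsum_mul_left, tsum_mul_left]
  rw [hrhs]
  refine Summable.tsum_le_tsum (fun i => ?_) hsz ((hsx.mul_left α).add (hsy.mul_left (1-α)))
  have h := HH_combo i hα0 hα1 hx hy
  have h2 := mul_le_mul_of_nonneg_left h (dd_nonneg i)
  nlinarith [h2]

lemma fS_eq (a : ℝ) :
    Real.exp (-a) * (∑' k : ℕ, a ^ k / (k.factorial : ℝ) * Real.log (k.factorial : ℝ))
      = fS a :=
  (tsum_pk a _).symm

end Stmt18Aux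

open Real RD Stmt18Aux

/-- Lemma: for `α ∈ [0,1]`, `x, y > 0` and `z = αx + (1-α)y`,
`H_P(z) - (α H_P(x) + (1-α) H_P(y)) ≤ α I_P(x:z) + (1-α) I_P(y:z)` and
`α I_P(x:z) + (1-α) I_P(y:z) = z·I(αx/z : α)`. -/
theorem stmt_18 (α x y : ℝ) (hα0 : 0 ≤ α) (hα1 : α ≤ 1) (hx : 0 < x) (hy : 0 < y) :
    HPois (α * x + (1 - α) * y) - (α * HPois x + (1 - α) * HPois y)
        ≤ α * IPois x (α * x + (1 - α) * y) + (1 - α) * IPois y (α * x + (1 - α) * y)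
    ∧ α * IPois x (α * x + (1 - α) * y) + (1 - α) * IPois y (α * x + (1 - α) * y)
        = (α * x + (1 - α) * y) * Ibern (α * x / (α * x + (1 - α) * y)) α := by
  have hz : 0 < α * x + (1 - α) * y := by
    rcases eq_or_lt_of_le hα0 with h | h
    · rw [← h]; simpa using hy
    · have h1 : 0 < α * x := mul_pos h hx
      have h2 : 0 ≤ (1 - α) * y := mul_nonneg (by linarith) hy.le
      linarith
  constructor
  · have key := fS_combo hα0 hα1 hx.le hy.le
    simp only [HPois, IPois]
    rw [fS_eq, fS_eq, fS_eq]
    nlinarith [key]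
  · rcases eq_or_lt_of_le hα0 with h0 | h0
    · rw [← h0]
      simp [IPois, Ibern]
    rcases eq_or_lt_of_le hα1 with h1 | h1
    · rw [h1]
      have : (1:ℝ) * x + (1 - 1) * y = x := by ring
      rw [this]
      simp [IPois, Ibern, div_self hx.ne']
    · have hα0' : α ≠ 0 := ne_of_gt h0
      have hα1' : (1:ℝ) - α ≠ 0 := by intro h; apply absurd h1; simp; linarith
      have hzne : α * x + (1 - α) * y ≠ 0 := hz.ne'
      have h2 : 1 - α * x / (α * x + (1 - α) * y)
          = (1 - α) * y / (α * x + (1 - α) * y) := by field_simp; ring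
      rw [Ibern, h2]
      have h3 : α * x / (α * x + (1 - α) * y) / α = x / (α * x + (1 - α) * y) := by
        field_simp
      have h4 : (1 - α) * y / (α * x + (1 - α) * y) / (1 - α)
          = y / (α * x + (1 - α) * y) := by field_simp
      rw [h3, h4, Real.log_div hx.ne' hzne, Real.log_div hy.ne' hzne]
      simp only [IPois]
      field_simp
      ring
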